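/- For every positive integer k there exists n₀ such that for all n ≥ n₀ the following holds. For every red/blue coloring of the edges of the complete graph K_n, there is a vertex subset U with |U| ≥ n/3 and a color (red or blue) such that at least one of the following holds: (i) U contains at least 12^{−k}·C(n,k) monochromatic k-cliques in that color, and every such monochromatic k-clique in U extends to at least n/2 monochromatic (k+1)-cliques of the same color in the whole graph; or (ii) every vertex of U has both red degree and blue degree at least (n−3)/(12k). -/

import Mathlib

/-!
Put `t = (n - 3) / (12k)`. If at least `n / 3` vertices have both colour degrees `≥ t`, we are in
case (ii). Otherwise, for some colour `c`, the set `U` of vertices of `c`-degree `< t` has at least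
`n / 3` elements, and every vertex of `U` misses at most `t + 1` vertices in the other colour `c'`.
So any `k` vertices of `U` have at least `n - k(t + 1) ≥ n / 2` common `c'`-neighbours, and every
`c'`-clique of size `j < k` in `U` extends inside `U` in at least `|U| - j(t + 1) ≥ n / 12` ways.
Double counting then yields at least `(n / 12)^k / k! ≥ 12^{-k} C(n, k)` monochromatic
`k`-cliques of colour `c'` in `U`.
-/

open Finset
open scoped Nat

theorem Nat.cast_mul_floor_div_add_one_le {x : ℝ} (hx : 0 ≤ x) (k : ℕ) :
    (k : ℝ) * (⌊x / k⌋₊ + 1) ≤ x + k := by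
  have hfloor : (k : ℝ) * ⌊x / k⌋₊ ≤ x := by
    rcases eq_or_ne k 0 with rfl | hk
    · simpa using hx
    · calc (k : ℝ) * ⌊x / k⌋₊ ≤ k * (x / k) := by
            gcongr; exact Nat.floor_le (by positivity)
        _ = x := by field_simp
  linarith

theorem Finset.card_div_three_le_or_exists {V : Type*} [Fintype V] [DecidableEq V]
    (P : Bool → V → Prop) [∀ c, DecidablePred (P c)] :
    (Fintype.card V : ℝ) / 3 ≤ #{v | ∀ c, P c v} ∨
      ∃ c, (Fintype.card V : ℝ) / 3 ≤ #{v | ¬P c v} := by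
  have hsplit := card_filter_add_card_filter_not (s := univ) (fun v => ∀ c, P c v)
  have hbad : #{v | ¬∀ c, P c v} ≤ #{v | ¬P true v} + #{v | ¬P false v} := by
    simp_rw [not_forall, Bool.exists_bool, filter_or]
    exact (card_union_le _ _).trans_eq (add_comm _ _)
  have hcover :
      (Fintype.card V : ℝ) ≤ #{v | ∀ c, P c v} + #{v | ¬P true v} + #{v | ¬P false v} := by
    rw [← card_univ]
    exact_mod_cast hsplit.symm.le.trans (by omega)
  by_contra! h
  linarith [h.1, h.2 true, h.2 false]

namespace SimpleGraph

section CliqueCounting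

variable {V : Type*} [DecidableEq V] (G : SimpleGraph V) [DecidableRel G.Adj]

def commonNeighborsIn (s K : Finset V) : Finset V := {w ∈ s | ∀ u ∈ K, G.Adj w u}

theorem card_le_card_commonNeighborsIn_add_mul (s K : Finset V) {m : ℕ}
    (hm : ∀ u ∈ K, #{w ∈ s | ¬G.Adj u w} ≤ m) :
    #s ≤ #(G.commonNeighborsIn s K) + #K * m := by
  have hcover : s ⊆ G.commonNeighborsIn s K ∪ K.biUnion fun u => {w ∈ s | ¬G.Adj u w} := by
    intro w hw
    by_cases! h : ∀ u ∈ K, G.Adj w u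
    · exact mem_union_left _ (mem_filter.2 ⟨hw, h⟩)
    · obtain ⟨u, hu, hwu⟩ := h
      exact mem_union_right _ (mem_biUnion.2 ⟨u, hu, mem_filter.2 ⟨hw, (hwu ·.symm)⟩⟩)
  have hbad : #(K.biUnion fun u => {w ∈ s | ¬G.Adj u w}) ≤ #K * m :=
    card_biUnion_le_card_mul _ _ _ hm
  exact (card_le_card hcover).trans ((card_union_le _ _).trans (by gcongr))

def cliquesIn (U : Finset V) (j : ℕ) : Finset (Finset V) := {K ∈ U.powerset | G.IsNClique j K}

@[simp] theorem mem_cliquesIn {U K : Finset V} {j : ℕ} :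
    K ∈ G.cliquesIn U j ↔ K ⊆ U ∧ G.IsNClique j K := by
  simp [cliquesIn]

theorem card_cliquesIn_mul_le (U : Finset V) {m : ℕ}
    (hm : ∀ v ∈ U, #{w ∈ U | ¬G.Adj v w} ≤ m) (j : ℕ) :
    #(G.cliquesIn U j) * (#U - j * m) ≤ #(G.cliquesIn U (j + 1)) * (j + 1) := by
  refine card_mul_le_card_mul (· ⊆ ·) (fun K hK => ?_) (fun L hL => ?_)
  · obtain ⟨hKU, hK⟩ := G.mem_cliquesIn.1 hK
    calc #U - j * m ≤ #(G.commonNeighborsIn U K) := by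
          have := G.card_le_card_commonNeighborsIn_add_mul U K fun u hu => hm u (hKU hu)
          rw [hK.card_eq] at this
          omega
      _ ≤ _ := card_le_card_of_injOn (insert · K) (fun w hw => ?_) (fun w hw w' hw' h => ?_)
    · obtain ⟨hwU, hwK⟩ := mem_filter.1 hw
      rw [mem_coe, bipartiteAbove, mem_filter, mem_cliquesIn]
      exact ⟨⟨insert_subset hwU hKU, hK.insert hwK⟩, subset_insert w K⟩
    · have hwK : w ∉ K := fun h => G.loopless.irrefl w ((mem_filter.1 hw).2 w h)
      exact (insert_inj hwK).1 h
  · have hL := (G.mem_cliquesIn.1 hL).2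
    calc #(bipartiteBelow (· ⊆ ·) (G.cliquesIn U j) L) ≤ #(L.powersetCard j) :=
          card_le_card fun K hK => by
            simp only [bipartiteBelow, mem_filter] at hK
            exact mem_powersetCard.2 ⟨hK.2, (G.mem_cliquesIn.1 hK.1).2.card_eq⟩
      _ = j + 1 := by simp [hL.card_eq]

theorem pow_div_factorial_le_card_cliquesIn (U : Finset V) {m : ℕ}
    (hm : ∀ v ∈ U, #{w ∈ U | ¬G.Adj v w} ≤ m) {c : ℝ} (hc : 0 ≤ c) :
    ∀ k : ℕ, c + k * m ≤ #U → c ^ k / k ! ≤ #(G.cliquesIn U k)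
  | 0, _ => by simpa using ⟨∅, by simp⟩
  | k + 1, hcU => by
    push_cast at hcU
    have hkm : c + k * m ≤ #U := by linarith [(m.cast_nonneg : (0 : ℝ) ≤ m)]
    have ih := pow_div_factorial_le_card_cliquesIn U hm hc k hkm
    have hext : c ≤ ((#U - k * m : ℕ) : ℝ) := by
      rw [Nat.cast_sub (by exact_mod_cast (by linarith : (k * m : ℝ) ≤ #U))]
      push_cast
      linarith
    have hstep : ((#U - k * m : ℕ) * #(G.cliquesIn U k) : ℝ) ≤
        #(G.cliquesIn U (k + 1)) * (k + 1) := by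
      rw [mul_comm]
      exact_mod_cast G.card_cliquesIn_mul_le U hm k
    calc c ^ (k + 1) / (k + 1)! = c * (c ^ k / k !) / (k + 1) := by
          rw [Nat.factorial_succ]; push_cast; field_simp; ring
      _ ≤ ((#U - k * m : ℕ) : ℝ) * #(G.cliquesIn U k) / (k + 1) := by gcongr
      _ ≤ #(G.cliquesIn U (k + 1)) := by rwa [div_le_iff₀ (by positivity)]

theorem pow_mul_choose_le_card_cliquesIn (U : Finset V) {m : ℕ}
    (hm : ∀ v ∈ U, #{w ∈ U | ¬G.Adj v w} ≤ m) {a : ℝ} (ha : 0 ≤ a) (N k : ℕ)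
    (hU : a * N + k * m ≤ #U) : a ^ k * N.choose k ≤ #(G.cliquesIn U k) :=
  calc a ^ k * N.choose k ≤ a ^ k * (N ^ k / k !) := by gcongr; exact Nat.choose_le_pow_div k N
    _ = (a * N) ^ k / k ! := by ring
    _ ≤ #(G.cliquesIn U k) := G.pow_div_factorial_le_card_cliquesIn U hm (by positivity) k hU

end CliqueCounting

section Coloring

variable {V : Type*} (χ : Sym2 V → Bool)

def colorGraph (b : Bool) : SimpleGraph V := fromEdgeSet {e | χ e = b}

@[simp] theorem colorGraph_adj {b : Bool} {v w : V} :
    (colorGraph χ b).Adj v w ↔ v ≠ w ∧ χ s(v, w) = b := by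
  simp [colorGraph, and_comm]

variable [DecidableEq V]

instance (b : Bool) : DecidableRel (colorGraph χ b).Adj :=
  fun _ _ => decidable_of_iff' _ (colorGraph_adj χ)

theorem ncard_eq_card_cliquesIn (U : Finset V) (b : Bool) (k : ℕ) :
    {K : Finset V | K ⊆ U ∧ K.card = k ∧
        ∀ u ∈ K, ∀ v ∈ K, u ≠ v → χ s(u, v) = b}.ncard =
      #((colorGraph χ b).cliquesIn U k) := by
  rw [← Set.ncard_coe_finset]
  congr 1
  ext K
  simp +contextual [isNClique_iff, isClique_iff, Set.Pairwise, and_comm]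

variable [Fintype V]

theorem ncard_eq_card_commonNeighborsIn (K : Finset V) (b : Bool) :
    {w : V | w ∉ K ∧ ∀ u ∈ K, χ s(w, u) = b}.ncard =
      #((colorGraph χ b).commonNeighborsIn univ K) := by
  rw [← Set.ncard_coe_finset]
  congr 1
  ext w
  simp [commonNeighborsIn, forall_and]

theorem card_filter_not_adj_colorGraph_not_le (s : Finset V) (v : V) (b : Bool) :
    #{w ∈ s | ¬(colorGraph χ (!b)).Adj v w} ≤ (colorGraph χ b).degree v + 1 := by
  rw [← card_neighborFinset_eq_degree]
  refine (card_le_card fun w hw => ?_).trans (card_insert_le v _)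
  by_cases h : v = w <;> simp_all

theorem ncard_eq_degree_colorGraph (v : V) (b : Bool) :
    {u : V | u ≠ v ∧ χ s(v, u) = b}.ncard = (colorGraph χ b).degree v := by
  rw [← card_neighborFinset_eq_degree, ← Set.ncard_coe_finset]
  congr 1
  ext u
  simp [ne_comm]

end Coloring

end SimpleGraph

open SimpleGraph

theorem mono_cliques_or_bidegree_general (k : ℕ) :
    ∃ n₀ : ℕ, ∀ n : ℕ, n₀ ≤ n → ∀ χ : Sym2 (Fin n) → Bool,
      ∃ (U : Finset (Fin n)) (b : Bool), (n : ℝ) / 3 ≤ (U.card : ℝ) ∧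
        (((12 : ℝ)⁻¹ ^ k * (n.choose k : ℝ) ≤
            ({K : Finset (Fin n) | K ⊆ U ∧ K.card = k ∧
                ∀ u ∈ K, ∀ v ∈ K, u ≠ v → χ s(u, v) = b}.ncard : ℝ)) ∧
          (∀ K : Finset (Fin n), K ⊆ U → K.card = k →
            (∀ u ∈ K, ∀ v ∈ K, u ≠ v → χ s(u, v) = b) →
            (n : ℝ) / 2 ≤
              ({w : Fin n | w ∉ K ∧ ∀ u ∈ K, χ s(w, u) = b}.ncard : ℝ)) ∨
          ∀ v ∈ U,
            ((n : ℝ) - 3) / (12 * k) ≤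
              ({u : Fin n | u ≠ v ∧ χ s(v, u) = true}.ncard : ℝ) ∧
            ((n : ℝ) - 3) / (12 * k) ≤
              ({u : Fin n | u ≠ v ∧ χ s(v, u) = false}.ncard : ℝ)) := by
  refine ⟨6 * k + 3, fun n hn χ => ?_⟩
  simp_rw [ncard_eq_card_cliquesIn, ncard_eq_card_commonNeighborsIn, ncard_eq_degree_colorGraph]
  set t : ℝ := ((n : ℝ) - 3) / (12 * k)
  have hn' : (6 * k + 3 : ℝ) ≤ n := by exact_mod_cast hn
  have hkt : (k : ℝ) * (⌊t⌋₊ + 1) ≤ (n - 3) / 12 + k := by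
    have := Nat.cast_mul_floor_div_add_one_le (x := ((n : ℝ) - 3) / 12) (by linarith) k
    rwa [div_div] at this
  have hsplit := card_div_three_le_or_exists fun c v => t ≤ (colorGraph χ c).degree v
  rw [Fintype.card_fin] at hsplit
  obtain hB | ⟨c, hc⟩ := hsplit
  · refine ⟨_, true, hB, Or.inr fun v hv => ?_⟩
    exact ⟨(mem_filter.1 hv).2 true, (mem_filter.1 hv).2 false⟩
  set U : Finset (Fin n) := {v | ¬t ≤ (colorGraph χ c).degree v}
  have hm : ∀ s, ∀ v ∈ U, #{w ∈ s | ¬(colorGraph χ (!c)).Adj v w} ≤ ⌊t⌋₊ + 1 := by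
    intro s v hv
    have hdeg := Nat.le_floor (not_le.1 (mem_filter.1 hv).2).le
    exact (card_filter_not_adj_colorGraph_not_le χ s v c).trans (by omega)
  refine ⟨U, !c, hc, Or.inl ⟨?_, fun K hKU hK _ => ?_⟩⟩
  · exact pow_mul_choose_le_card_cliquesIn _ U (hm U) (by norm_num) n k (by push_cast; linarith)
  · have := (colorGraph χ (!c)).card_le_card_commonNeighborsIn_add_mul univ K
      fun u hu => hm univ u (hKU hu)
    rw [card_univ, Fintype.card_fin, hK] at this
    have : (n : ℝ) ≤ #((colorGraph χ (!c)).commonNeighborsIn univ K) + k * (⌊t⌋₊ + 1) :=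
      mod_cast this
    linarith

/-- For every `k` and every sufficiently large `n`, every red/blue coloring of `K_n` has a
vertex set `U` with `|U| ≥ n/3` and a color `b` such that either `U` contains at least
`12^{-k} C(n,k)` monochromatic `K_k` in color `b`, each extending to at least `n/2`
monochromatic `K_{k+1}` in color `b`, or every vertex of `U` has both red and blue degree at
least `(n-3)/(12k)`. -/
theorem mono_cliques_or_bidegree (k : ℕ) (hk : 1 ≤ k) :
    ∃ n₀ : ℕ, ∀ n : ℕ, n₀ ≤ n → ∀ χ : Sym2 (Fin n) → Bool,
      ∃ (U : Finset (Fin n)) (b : Bool), (n : ℝ) / 3 ≤ (U.card : ℝ) ∧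
        (((12 : ℝ)⁻¹ ^ k * (n.choose k : ℝ) ≤
            ({K : Finset (Fin n) | K ⊆ U ∧ K.card = k ∧
                ∀ u ∈ K, ∀ v ∈ K, u ≠ v → χ s(u, v) = b}.ncard : ℝ)) ∧
          (∀ K : Finset (Fin n), K ⊆ U → K.card = k →
            (∀ u ∈ K, ∀ v ∈ K, u ≠ v → χ s(u, v) = b) →
            (n : ℝ) / 2 ≤
              ({w : Fin n | w ∉ K ∧ ∀ u ∈ K, χ s(w, u) = b}.ncard : ℝ)) ∨
          ∀ v ∈ U,
            ((n : ℝ) - 3) / (12 * k) ≤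
              ({u : Fin n | u ≠ v ∧ χ s(v, u) = true}.ncard : ℝ) ∧
            ((n : ℝ) - 3) / (12 * k) ≤
              ({u : Fin n | u ≠ v ∧ χ s(v, u) = false}.ncard : ℝ)) :=
  mono_cliques_or_bidegree_general k
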